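/- arXiv:2006.08737 — 2 statements merged into one kernel-verified Lean document; each statement's English description precedes it below -/
import Mathlib

section
/- Let H be symmetric positive definite, φ(p) = (1/2)pᵀHp − gᵀp with minimizer p* = H⁻¹g, and suppose the vector p̂ satisfies φ(p̂) ≤ ε² + (1−ζ²)φ(p*) for some ζ ∈ (0,1), ε ≥ 0. Assume f has L-Lipschitz Hessian, H = ∇²f(w_t), g = ∇f(w_t), ∇f(w*) = 0, and w_{t+1} = w_t − p̂. Then with Δ_t = w_t − w* and Δ_{t+1} = w_{t+1} − w*, one has Δ_{t+1}ᵀ H Δ_{t+1} ≤ L‖Δ_{t+1}‖‖Δ_t‖² + (ζ²/(1−ζ²)) Δ_tᵀ H Δ_t + 2ε². -/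
/-!
Write `Δ' = Δ - p̂` and let `e = g - HΔ` be the residual of the linearisation of `∇f` at `w_t`;
since `∇f(w*) = 0` and the Hessian is `L`-Lipschitz, `‖e‖ ≤ (L/2)‖Δ‖²`. Completing the square,
`Δ'ᵀHΔ' = ΔᵀHΔ + 2φ(p̂) + 2eᵀp̂`. By minimality of `p*`, `φ(p̂) ≤ ε² + (1-ζ²)φ(Δ/(1-ζ²))`, and with
this comparison point the terms `eᵀΔ` cancel, leaving `-2eᵀΔ'`, which Cauchy–Schwarz bounds by
`L‖Δ'‖‖Δ‖²`.
-/

open Matrix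

section QuadraticModel

variable {n : Type*} [Fintype n]

noncomputable def quadModel (H : Matrix n n ℝ) (b p : n → ℝ) : ℝ :=
  1 / 2 * (p ⬝ᵥ H *ᵥ p) - b ⬝ᵥ p

lemma Matrix.IsSymm.dotProduct_mulVec_comm {H : Matrix n n ℝ} (hH : H.IsSymm) (x y : n → ℝ) :
    x ⬝ᵥ H *ᵥ y = y ⬝ᵥ H *ᵥ x := by
  rw [dotProduct_mulVec, ← mulVec_transpose, hH.eq, dotProduct_comm]

lemma Matrix.IsSymm.quadModel_sub_quadModel {H : Matrix n n ℝ} (hH : H.IsSymm) {b p : n → ℝ}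
    (hp : H *ᵥ p = b) (q : n → ℝ) :
    quadModel H b q - quadModel H b p = 1 / 2 * ((q - p) ⬝ᵥ H *ᵥ (q - p)) := by
  simp only [quadModel, ← hp, mulVec_sub, dotProduct_sub, sub_dotProduct]
  linarith [hH.dotProduct_mulVec_comm p q, dotProduct_comm (H *ᵥ p) q,
    dotProduct_comm (H *ᵥ p) p]

lemma Matrix.PosDef.quadModel_inv_mulVec_le [DecidableEq n] {H : Matrix n n ℝ} (hH : H.PosDef)
    (b q : n → ℝ) : quadModel H b (H⁻¹ *ᵥ b) ≤ quadModel H b q := by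
  have hp : H *ᵥ (H⁻¹ *ᵥ b) = b := by
    rw [mulVec_mulVec, mul_nonsing_inv _ hH.det_pos.ne'.isUnit, one_mulVec]
  have hsq : 0 ≤ (q - H⁻¹ *ᵥ b) ⬝ᵥ H *ᵥ (q - H⁻¹ *ᵥ b) := by
    simpa using hH.posSemidef.dotProduct_mulVec_nonneg (q - H⁻¹ *ᵥ b)
  linarith [(isHermitian_iff_isSymm.mp hH.1).quadModel_sub_quadModel hp q]

lemma Matrix.IsSymm.sub_dotProduct_mulVec_sub {H : Matrix n n ℝ} (hH : H.IsSymm)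
    (b Δ p : n → ℝ) :
    (Δ - p) ⬝ᵥ H *ᵥ (Δ - p) =
      Δ ⬝ᵥ H *ᵥ Δ + 2 * quadModel H b p + 2 * ((b - H *ᵥ Δ) ⬝ᵥ p) := by
  simp only [quadModel, mulVec_sub, dotProduct_sub, sub_dotProduct]
  linarith [hH.dotProduct_mulVec_comm p Δ, dotProduct_comm (H *ᵥ Δ) p]

lemma Matrix.PosDef.sub_dotProduct_mulVec_sub_le [DecidableEq n] {H : Matrix n n ℝ}
    (hH : H.PosDef) {b p : n → ℝ} {ε ζ : ℝ} (hζ : ζ ^ 2 < 1)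
    (hp : quadModel H b p ≤ ε ^ 2 + (1 - ζ ^ 2) * quadModel H b (H⁻¹ *ᵥ b)) (Δ : n → ℝ) :
    (Δ - p) ⬝ᵥ H *ᵥ (Δ - p) ≤
      ζ ^ 2 / (1 - ζ ^ 2) * (Δ ⬝ᵥ H *ᵥ Δ) + 2 * ε ^ 2 - 2 * ((b - H *ᵥ Δ) ⬝ᵥ (Δ - p)) := by
  have hc : 0 < 1 - ζ ^ 2 := by linarith
  set c := (1 - ζ ^ 2)⁻¹
  have hq : (1 - ζ ^ 2) * quadModel H b (c • Δ) =
      (ζ ^ 2 / (1 - ζ ^ 2) - 1) / 2 * (Δ ⬝ᵥ H *ᵥ Δ) - (b - H *ᵥ Δ) ⬝ᵥ Δ := by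
    simp only [quadModel, mulVec_smul, dotProduct_smul, smul_dotProduct, sub_dotProduct,
      smul_eq_mul, c]
    rw [dotProduct_comm (H *ᵥ Δ) Δ]
    field_simp
    ring
  have hmin := mul_le_mul_of_nonneg_left (hH.quadModel_inv_mulVec_le b (c • Δ)) hc.le
  rw [(isHermitian_iff_isSymm.mp hH.1).sub_dotProduct_mulVec_sub b Δ p, dotProduct_sub]
  linarith

end QuadraticModel

section Taylor

variable {E F : Type*} [NormedAddCommGroup E] [NormedSpace ℝ E]
  [NormedAddCommGroup F] [NormedSpace ℝ F]

lemma norm_sub_sub_fderiv_apply_le_of_lipschitz {g : E → F} {g' : E → E →L[ℝ] F} {L : ℝ}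
    {x y : E} (hg : ∀ w, HasFDerivAt g (g' w) w) (hlip : ∀ w, ‖g' w - g' x‖ ≤ L * ‖w - x‖) :
    ‖g x - g y - g' x (x - y)‖ ≤ L / 2 * ‖x - y‖ ^ 2 := by
  set C := L * ‖x - y‖ ^ 2
  set γ : ℝ → F := fun s => g (y + s • (x - y)) - g y - s • g' x (x - y)
  have hγ : ∀ s, HasDerivAt γ (g' (y + s • (x - y)) (x - y) - g' x (x - y)) s := by
    intro s
    have hline : HasDerivAt (fun s : ℝ => y + s • (x - y)) (x - y) s := by
      simpa using ((hasDerivAt_id s).smul_const (x - y)).const_add y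
    exact (((hg _).comp_hasDerivAt s hline).sub_const (g y)).sub
      (by simpa using (hasDerivAt_id s).smul_const (g' x (x - y)))
  have hbound : ∀ s ∈ Set.Ico (0 : ℝ) 1,
      ‖g' (y + s • (x - y)) (x - y) - g' x (x - y)‖ ≤ C * (1 - s) := by
    intro s hs
    have hdist : y + s • (x - y) - x = (s - 1) • (x - y) := by
      rw [sub_smul, one_smul]; abel
    calc ‖g' (y + s • (x - y)) (x - y) - g' x (x - y)‖
        = ‖(g' (y + s • (x - y)) - g' x) (x - y)‖ := rfl
      _ ≤ L * ‖y + s • (x - y) - x‖ * ‖x - y‖ :=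
        ((g' _ - g' x).le_opNorm _).trans (by gcongr; exact hlip _)
      _ = C * (1 - s) := by
        rw [hdist, norm_smul, Real.norm_eq_abs, abs_of_nonpos (by linarith [hs.2])]
        ring
  have hB : ∀ s : ℝ, HasDerivAt (fun s => C * (s - s ^ 2 / 2)) (C * (1 - s)) s := by
    intro s
    refine (((hasDerivAt_id s).sub ((hasDerivAt_pow 2 s).div_const 2)).const_mul C).congr_deriv ?_
    push_cast
    ring
  have h1 := image_norm_le_of_norm_deriv_right_le_deriv_boundary
    (fun s _ => (hγ s).continuousAt.continuousWithinAt) (fun s _ => (hγ s).hasDerivWithinAt)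
    (by simp [γ]) hB hbound (Set.right_mem_Icc.2 zero_le_one)
  have hγ1 : γ 1 = g x - g y - g' x (x - y) := by simp [γ]
  calc ‖g x - g y - g' x (x - y)‖ ≤ C * (1 - 1 ^ 2 / 2) := hγ1 ▸ h1
    _ = L / 2 * ‖x - y‖ ^ 2 := by ring

end Taylor

lemma EuclideanSpace.dotProduct_le_norm_mul_norm {ι : Type*} [Fintype ι]
    (x y : EuclideanSpace ℝ ι) : x.ofLp ⬝ᵥ y.ofLp ≤ ‖x‖ * ‖y‖ := by
  simpa [EuclideanSpace.inner_eq_star_dotProduct, dotProduct_comm] using real_inner_le_norm x y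

theorem stmt6_general {d : ℕ}
    (g : EuclideanSpace ℝ (Fin d) → EuclideanSpace ℝ (Fin d))
    (Hf : EuclideanSpace ℝ (Fin d) → Matrix (Fin d) (Fin d) ℝ)
    (L ε ζ : ℝ) (hζ : ζ ∈ Set.Ioo (0 : ℝ) 1)
    (hhess : ∀ w, HasFDerivAt g
      (LinearMap.toContinuousLinearMap (Matrix.toEuclideanLin (Hf w))) w)
    (hlip : ∀ w w', ‖LinearMap.toContinuousLinearMap (Matrix.toEuclideanLin (Hf w)) -
        LinearMap.toContinuousLinearMap (Matrix.toEuclideanLin (Hf w'))‖ ≤ L * ‖w - w'‖)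
    (wt wt1 wstar phat pstar : EuclideanSpace ℝ (Fin d))
    (H : Matrix (Fin d) (Fin d) ℝ) (hHdef : H = Hf wt) (hH : H.PosDef)
    (hstar : g wstar = 0)
    (φ : EuclideanSpace ℝ (Fin d) → ℝ)
    (hφ : ∀ p : EuclideanSpace ℝ (Fin d),
      φ p = (1 / 2) * (p ⬝ᵥ H.mulVec p) - (g wt) ⬝ᵥ p)
    (hpstar : pstar = H⁻¹.mulVec (g wt))
    (hphat : φ phat ≤ ε ^ 2 + (1 - ζ ^ 2) * φ pstar)
    (hupdate : wt1 = wt - phat)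
    (Δt Δt1 : EuclideanSpace ℝ (Fin d))
    (hΔt : Δt = wt - wstar) (hΔt1 : Δt1 = wt1 - wstar) :
    Δt1 ⬝ᵥ H.mulVec Δt1 ≤
      L * ‖Δt1‖ * ‖Δt‖ ^ 2 + (ζ ^ 2 / (1 - ζ ^ 2)) * (Δt ⬝ᵥ H.mulVec Δt) + 2 * ε ^ 2 := by
  subst hHdef
  set e := g wt - g wstar - LinearMap.toContinuousLinearMap (toEuclideanLin (Hf wt)) (wt - wstar)
  have he : e.ofLp = (g wt).ofLp - Hf wt *ᵥ Δt.ofLp := by simp [e, hstar, hΔt, mulVec_sub]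
  have hTaylor : ‖e‖ ≤ L / 2 * ‖Δt‖ ^ 2 :=
    hΔt ▸ norm_sub_sub_fderiv_apply_le_of_lipschitz hhess (fun w => hlip w wt)
  have hmodel : quadModel (Hf wt) (g wt) phat ≤
      ε ^ 2 + (1 - ζ ^ 2) * quadModel (Hf wt) (g wt) ((Hf wt)⁻¹ *ᵥ g wt) := by
    rwa [hφ, hφ, hpstar] at hphat
  have hstep := hH.sub_dotProduct_mulVec_sub_le (by nlinarith [hζ.1, hζ.2]) hmodel Δt.ofLp
  have hnext : Δt.ofLp - phat.ofLp = Δt1.ofLp := by simp [hΔt, hΔt1, hupdate]; abel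
  rw [hnext, ← he] at hstep
  have hcs := EuclideanSpace.dotProduct_le_norm_mul_norm (-e) Δt1
  rw [WithLp.ofLp_neg, neg_dotProduct, norm_neg] at hcs
  linarith [mul_le_mul_of_nonneg_right hTaylor (norm_nonneg Δt1)]

/-- With H = ∇²f(w_t) positive definite, g = ∇f(w_t),
φ(p) = (1/2)pᵀHp − gᵀp minimized by p* = H⁻¹g, if the Hessian of f is L-Lipschitz
(operator norm), ∇f(w*) = 0, p̂ satisfies φ(p̂) ≤ ε² + (1−ζ²)φ(p*), and
w_{t+1} = w_t − p̂, then with Δ_t = w_t − w*, Δ_{t+1} = w_{t+1} − w*: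
Δ_{t+1}ᵀHΔ_{t+1} ≤ L‖Δ_{t+1}‖‖Δ_t‖² + (ζ²/(1−ζ²))Δ_tᵀHΔ_t + 2ε². -/
theorem stmt6 {d : ℕ} (f : EuclideanSpace ℝ (Fin d) → ℝ)
    (g : EuclideanSpace ℝ (Fin d) → EuclideanSpace ℝ (Fin d))
    (Hf : EuclideanSpace ℝ (Fin d) → Matrix (Fin d) (Fin d) ℝ)
    (L ε ζ : ℝ) (hL : 0 ≤ L) (hζ : ζ ∈ Set.Ioo (0 : ℝ) 1) (hε : 0 ≤ ε)
    (hgrad : ∀ w, HasGradientAt f (g w) w)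
    (hhess : ∀ w, HasFDerivAt g
      (LinearMap.toContinuousLinearMap (Matrix.toEuclideanLin (Hf w))) w)
    (hlip : ∀ w w', ‖LinearMap.toContinuousLinearMap (Matrix.toEuclideanLin (Hf w)) -
        LinearMap.toContinuousLinearMap (Matrix.toEuclideanLin (Hf w'))‖ ≤ L * ‖w - w'‖)
    (wt wt1 wstar phat pstar : EuclideanSpace ℝ (Fin d))
    (H : Matrix (Fin d) (Fin d) ℝ) (hHdef : H = Hf wt) (hH : H.PosDef)
    (hstar : g wstar = 0)
    (φ : EuclideanSpace ℝ (Fin d) → ℝ)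
    (hφ : ∀ p : EuclideanSpace ℝ (Fin d),
      φ p = (1 / 2) * (p ⬝ᵥ H.mulVec p) - (g wt) ⬝ᵥ p)
    (hpstar : pstar = H⁻¹.mulVec (g wt))
    (hphat : φ phat ≤ ε ^ 2 + (1 - ζ ^ 2) * φ pstar)
    (hupdate : wt1 = wt - phat)
    (Δt Δt1 : EuclideanSpace ℝ (Fin d))
    (hΔt : Δt = wt - wstar) (hΔt1 : Δt1 = wt1 - wstar) :
    Δt1 ⬝ᵥ H.mulVec Δt1 ≤
      L * ‖Δt1‖ * ‖Δt‖ ^ 2 + (ζ ^ 2 / (1 - ζ ^ 2)) * (Δt ⬝ᵥ H.mulVec Δt) + 2 * ε ^ 2 :=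
  stmt6_general g Hf L ε ζ hζ hhess hlip wt wt1 wstar phat pstar H hHdef hH hstar φ hφ hpstar hphat
    hupdate Δt Δt1 hΔt hΔt1
end

section
/- Let X₁,…,X_m be independent random variables taking values in a set A, and f : A^m → ℝ satisfy the bounded differences condition with constants c₁,…,c_m: changing the i-th coordinate changes f by at most c_i. Then for every t > 0, P[f(X₁,…,X_m) − E f(X₁,…,X_m) ≥ t] ≤ exp(−2t²/∑_{i=1}^m c_i²). -/
open MeasureTheory ProbabilityTheory Real
open scoped NNReal

/-!
Condition on the first coordinate. With the others fixed, `f` ranges over an interval of length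
`c₀`, so by Hoeffding's lemma `f` minus its average over the first coordinate is sub-Gaussian with
parameter `c₀² / 4` under every such conditioning. The average is a function of the remaining
coordinates with bounded differences `c₁, …`, so by induction the parameters add up to
`∑ cᵢ² / 4` under the product measure, which is the joint law of independent `Xᵢ`. The Chernoff
bound for sub-Gaussian variables then gives `exp (-t² / (2 ∑ cᵢ² / 4))`.
-/

lemma exists_forall_mem_Icc_of_abs_sub_le {α : Type*} {h : α → ℝ} {C : ℝ}
    (hC : ∀ a a', |h a - h a'| ≤ C) : ∃ lo, ∀ a, h a ∈ Set.Icc lo (lo + C) := by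
  rcases isEmpty_or_nonempty α with hα | hα
  · exact ⟨0, isEmptyElim⟩
  have hbdd : BddBelow (Set.range h) := by
    obtain ⟨a₀⟩ := hα
    exact ⟨h a₀ - C, by rintro _ ⟨a, rfl⟩; linarith [(abs_le.1 (hC a₀ a)).2]⟩
  refine ⟨⨅ a, h a, fun a => ⟨ciInf_le hbdd a, ?_⟩⟩
  have : h a - C ≤ ⨅ a, h a := le_ciInf fun a' => by linarith [(abs_le.1 (hC a a')).2]
  linarith

section FinCons

variable {A : Type*} [MeasurableSpace A] {n : ℕ}

lemma MeasurableEquiv.piFinSuccAbove_zero_symm_apply (p : A × (Fin n → A)) :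
    (MeasurableEquiv.piFinSuccAbove (fun _ : Fin (n + 1) => A) 0).symm p = Fin.cons p.1 p.2 := by
  simp [MeasurableEquiv.piFinSuccAbove_symm_apply, Fin.insertNthEquiv, Fin.insertNth_zero']

lemma measurable_fin_cons :
    Measurable (fun p : A × (Fin n → A) => (Fin.cons p.1 p.2 : Fin (n + 1) → A)) := by
  rw [← funext MeasurableEquiv.piFinSuccAbove_zero_symm_apply]
  exact MeasurableEquiv.measurable _

variable {ν : Fin (n + 1) → Measure A} [∀ i, SigmaFinite (ν i)]

lemma integral_pi_fin_succ (F : (Fin (n + 1) → A) → ℝ) :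
    ∫ x, F x ∂Measure.pi ν =
      ∫ p, F (Fin.cons p.1 p.2) ∂(ν 0).prod (Measure.pi fun j => ν j.succ) := by
  simp only [← MeasurableEquiv.piFinSuccAbove_zero_symm_apply]
  exact ((measurePreserving_piFinSuccAbove ν 0).symm _).integral_comp' F |>.symm

lemma ProbabilityTheory.HasSubgaussianMGF.pi_fin_succ {F : (Fin (n + 1) → A) → ℝ} {c : ℝ≥0}
    (h : HasSubgaussianMGF (fun p : A × (Fin n → A) => F (Fin.cons p.1 p.2)) c
      ((ν 0).prod (Measure.pi fun j => ν j.succ))) :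
    HasSubgaussianMGF F c (Measure.pi ν) := by
  have hmap : (Measure.pi ν).map (MeasurableEquiv.piFinSuccAbove (fun _ => A) 0) =
      (ν 0).prod (Measure.pi fun j => ν j.succ) := (measurePreserving_piFinSuccAbove ν 0).map_eq
  simp only [← MeasurableEquiv.piFinSuccAbove_zero_symm_apply, ← hmap] at h
  simpa only [Function.comp_def, MeasurableEquiv.symm_apply_apply] using
    h.of_map (MeasurableEquiv.piFinSuccAbove (fun _ => A) 0).measurable.aemeasurable

end FinCons

namespace ProbabilityTheory

lemma hasSubgaussianMGF_of_abs_sub_le {α : Type*} [MeasurableSpace α] {μ : Measure α}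
    [IsProbabilityMeasure μ] {h : α → ℝ} (hm : Measurable h) {C : ℝ}
    (hC : ∀ a a', |h a - h a'| ≤ C) :
    HasSubgaussianMGF (fun a => h a - μ[h]) ((‖C‖₊ / 2) ^ 2) μ := by
  obtain ⟨lo, hlo⟩ := exists_forall_mem_Icc_of_abs_sub_le hC
  simpa using hasSubgaussianMGF_of_mem_Icc hm.aemeasurable (.of_forall hlo)

lemma HasSubgaussianMGF.add_prod {α β : Type*} [MeasurableSpace α] [MeasurableSpace β]
    {μ : Measure α} {ν : Measure β} [SFinite μ] [SFinite ν] {X : α × β → ℝ} {Y : β → ℝ}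
    {cX cY : ℝ≥0} (hX : ∀ y, HasSubgaussianMGF (fun a => X (a, y)) cX μ)
    (hY : HasSubgaussianMGF Y cY ν)
    (hint : ∀ t, Integrable (fun p => exp (t * (X p + Y p.2))) (μ.prod ν)) :
    HasSubgaussianMGF (fun p => X p + Y p.2) (cX + cY) (μ.prod ν) where
  integrable_exp_mul := hint
  mgf_le t := calc
    mgf (fun p => X p + Y p.2) (μ.prod ν) t
      = ∫ y, mgf (fun a => X (a, y)) μ t * exp (t * Y y) ∂ν := by
        simp only [mgf, ← integral_mul_const, ← exp_add, ← mul_add]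
        exact integral_prod_symm _ (hint t)
    _ ≤ ∫ y, exp (cX * t ^ 2 / 2) * exp (t * Y y) ∂ν := by
        refine integral_mono_of_nonneg (.of_forall fun y => ?_)
          ((hY.integrable_exp_mul t).const_mul _) (.of_forall fun y => ?_)
        · exact mul_nonneg mgf_nonneg (exp_pos _).le
        · exact mul_le_mul_of_nonneg_right ((hX y).mgf_le t) (exp_pos _).le
    _ ≤ exp (↑(cX + cY) * t ^ 2 / 2) := by
        rw [integral_const_mul, NNReal.coe_add, add_mul, add_div, exp_add]
        exact mul_le_mul_of_nonneg_left (hY.mgf_le t) (exp_pos _).le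

end ProbabilityTheory

def HasBoundedDifferences {ι A : Type*} [DecidableEq ι] (f : (ι → A) → ℝ) (c : ι → ℝ) : Prop :=
  ∀ (i : ι) (y : ι → A) (a : A), |f y - f (Function.update y i a)| ≤ c i

namespace HasBoundedDifferences

section General

variable {ι A : Type*} [DecidableEq ι] {c : ι → ℝ}

lemma abs_sub_le_sum [Fintype ι] {f : (ι → A) → ℝ} (hf : HasBoundedDifferences f c)
    (x y : ι → A) : |f x - f y| ≤ ∑ i, c i := by
  suffices ∀ s : Finset ι, |f x - f (s.piecewise y x)| ≤ ∑ i ∈ s, c i by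
    simpa using this Finset.univ
  intro s
  induction s using Finset.induction_on with
  | empty => simp
  | insert j s hj ih =>
    rw [Finset.piecewise_insert, Finset.sum_insert hj]
    have := hf j (s.piecewise y x) (y j)
    calc _ ≤ |f x - f (s.piecewise y x)| +
          |f (s.piecewise y x) - f (Function.update (s.piecewise y x) j (y j))| :=
          abs_sub_le _ _ _
      _ ≤ _ := by linarith

lemma integral [MeasurableSpace A] {μ : Measure A} [IsProbabilityMeasure μ]
    {F : A → (ι → A) → ℝ} (hF : ∀ a, HasBoundedDifferences (F a) c)
    (hint : ∀ y, Integrable (fun a => F a y) μ) :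
    HasBoundedDifferences (fun y => ∫ a, F a y ∂μ) c := by
  intro i y b
  rw [← integral_sub (hint y) (hint _), ← Real.norm_eq_abs]
  simpa using norm_integral_le_of_norm_le_const (μ := μ)
    (.of_forall fun a => (Real.norm_eq_abs _).trans_le (hF a i y b))

end General

section FinCons

variable {A : Type*} {n : ℕ} {f : (Fin (n + 1) → A) → ℝ} {c : Fin (n + 1) → ℝ}

lemma fin_cons (hf : HasBoundedDifferences f c) (a : A) :
    HasBoundedDifferences (fun y => f (Fin.cons a y)) (fun j => c j.succ) := by
  intro j y b
  simpa only [Fin.cons_update] using hf j.succ (Fin.cons a y) b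

lemma abs_sub_fin_cons_le (hf : HasBoundedDifferences f c) (y : Fin n → A) (a a' : A) :
    |f (Fin.cons a y) - f (Fin.cons a' y)| ≤ c 0 := by
  simpa only [Fin.update_cons_zero] using hf 0 (Fin.cons a y) a'

end FinCons

theorem hasSubgaussianMGF_pi {A : Type*} [MeasurableSpace A] {n : ℕ} {ν : Fin n → Measure A}
    [∀ i, IsProbabilityMeasure (ν i)] {f : (Fin n → A) → ℝ} {c : Fin n → ℝ}
    (hfm : Measurable f) (hf : HasBoundedDifferences f c) :
    HasSubgaussianMGF (fun x => f x - ∫ y, f y ∂Measure.pi ν) (∑ i, (‖c i‖₊ / 2) ^ 2)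
      (Measure.pi ν) := by
  induction n with
  | zero =>
    have hconst : ∀ x, f x = f default := fun x => congrArg f (Subsingleton.elim x default)
    simp [hconst]
  | succ n ih =>
    set g : (Fin n → A) → ℝ := fun y => ∫ a, f (Fin.cons a y) ∂ν 0
    have hcons : Measurable fun p : A × (Fin n → A) => f (Fin.cons p.1 p.2) :=
      hfm.comp measurable_fin_cons
    have hcons_left (y : Fin n → A) : Measurable fun a => f (Fin.cons a y) :=
      hcons.comp (measurable_id.prodMk measurable_const)
    obtain ⟨lo, hlo⟩ := exists_forall_mem_Icc_of_abs_sub_le hf.abs_sub_le_sum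
    have hX (y : Fin n → A) :
        HasSubgaussianMGF (fun a => f (Fin.cons a y) - g y) ((‖c 0‖₊ / 2) ^ 2) (ν 0) :=
      hasSubgaussianMGF_of_abs_sub_le (hcons_left y) (hf.abs_sub_fin_cons_le y)
    have hY := ih (ν := fun j => ν j.succ) (f := g) (c := fun j => c j.succ)
      (hcons.comp measurable_swap).stronglyMeasurable.integral_prod_right'.measurable
      (integral hf.fin_cons fun y =>
        .of_mem_Icc lo (lo + ∑ i, c i) (hcons_left y).aemeasurable (.of_forall fun _ => hlo _))
    have hmean : ∫ x, f x ∂Measure.pi ν = ∫ y, g y ∂Measure.pi fun j => ν j.succ := by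
      rw [integral_pi_fin_succ, integral_prod_symm]
      exact .of_mem_Icc lo (lo + ∑ i, c i) hcons.aemeasurable (.of_forall fun _ => hlo _)
    refine HasSubgaussianMGF.pi_fin_succ ?_
    rw [Fin.sum_univ_succ, hmean]
    simpa only [sub_add_sub_cancel] using
      HasSubgaussianMGF.add_prod (X := fun p => f (Fin.cons p.1 p.2) - g p.2) hX hY fun t => by
      simp only [sub_add_sub_cancel]
      exact integrable_exp_mul_of_mem_Icc (hcons.sub_const _).aemeasurable
        (.of_forall fun p => ⟨sub_le_sub_right (hlo _).1 _, sub_le_sub_right (hlo _).2 _⟩)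

end HasBoundedDifferences

/-- McDiarmid's inequality: If X₁,…,X_m are independent random
variables with values in A and f : Aᵐ → ℝ satisfies the bounded differences
condition with constants c₁,…,c_m, then for every t > 0,
P[f(X) − E f(X) ≥ t] ≤ exp(−2t²/∑ᵢcᵢ²). -/
theorem stmt19 {Ω A : Type*} [MeasurableSpace Ω] [MeasurableSpace A]
    {μ : Measure Ω} [IsProbabilityMeasure μ] {m : ℕ}
    (X : Fin m → Ω → A) (hXmeas : ∀ i, Measurable (X i))
    (hXindep : iIndepFun X μ)
    (f : (Fin m → A) → ℝ) (hfmeas : Measurable f)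
    (c : Fin m → ℝ)
    (hbdd : ∀ (i : Fin m) (y : Fin m → A) (a : A),
      |f y - f (Function.update y i a)| ≤ c i) :
    ∀ t : ℝ, 0 < t →
      μ {ω | (∫ ω', f (fun i => X i ω') ∂μ) + t ≤ f (fun i => X i ω)} ≤
        ENNReal.ofReal (Real.exp (-2 * t ^ 2 / ∑ i, (c i) ^ 2)) := by
  intro t ht
  have hT : Measurable fun ω i => X i ω := measurable_pi_lambda _ hXmeas
  have hlaw : μ.map (fun ω i => X i ω) = Measure.pi fun i => μ.map (X i) :=
    hXindep.map_fun_eq_pi_map fun i => (hXmeas i).aemeasurable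
  have hsub : HasSubgaussianMGF (fun ω => f (fun i => X i ω) - ∫ ω', f (fun i => X i ω') ∂μ)
      (∑ i, (‖c i‖₊ / 2) ^ 2) μ := by
    have (i : Fin m) : IsProbabilityMeasure (μ.map (X i)) :=
      Measure.isProbabilityMeasure_map (hXmeas i).aemeasurable
    have h := HasBoundedDifferences.hasSubgaussianMGF_pi (ν := fun i => μ.map (X i)) hfmeas hbdd
    rw [← hlaw, integral_map hT.aemeasurable hfmeas.aestronglyMeasurable] at h
    exact h.of_map hT.aemeasurable
  -- No case split on `∑ cᵢ² = 0`: both bounds then read `exp 0`, since `x / 0 = 0`.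
  have hparam : 2 * ((∑ i, (‖c i‖₊ / 2) ^ 2 : ℝ≥0) : ℝ) = (∑ i, c i ^ 2) / 2 := by
    push_cast
    simp only [Real.norm_eq_abs, div_pow, sq_abs, ← Finset.sum_div]
    ring
  calc μ {ω | (∫ ω', f (fun i => X i ω') ∂μ) + t ≤ f (fun i => X i ω)}
      = ENNReal.ofReal (μ.real {ω | t ≤ f (fun i => X i ω) - ∫ ω', f (fun i => X i ω') ∂μ}) := by
        rw [ofReal_measureReal]
        simp only [le_sub_iff_add_le']
    _ ≤ _ := by
        refine ENNReal.ofReal_le_ofReal ((hsub.measure_ge_le ht.le).trans_eq ?_)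
        rw [hparam]
        ring_nf
end
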